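/- arXiv:1201.3569 — 6 statements merged into one kernel-verified Lean document; each statement's English description precedes it below -/
import Mathlib

section
/- Let ξ_0, …, ξ_{n−1} be i.i.d. real random variables such that E exp(c^{−α}|ξ_i|^α) ≤ 2, where α ∈ (0,1] and c > 0. Set M = c·(3α^{−2} log n)^{1/α} (with the convention log n := log(max(n, e))) and Y_i = ξ_i·1_{|ξ_i| > M}. Then for every λ with 0 ≤ λ ≤ 1/(2^{1/α} c), E exp( λ^α · Σ_{i=0}^{n−1} (|Y_i| + E|Y_i|)^α ) ≤ exp(8). -/
/-!
Write `u = |x|^α / c^α` and `A = 3 α⁻² log n`, so that `|x| > M` iff `u > A`. On that event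
`λ^α |x|^α ≤ u/2 ≤ u - A/2`, and, since `αA ≥ 2`, `|x| = c u^{1/α} ≤ M e^{-A/2} e^u`. Against
`E e^u ≤ 2` this gives `E exp(λ^α |Y_i|^α) ≤ 1 + 2e^{-A/2}` and `E|Y_i| ≤ 2M e^{-A/2}`.
Subadditivity of `t ↦ t^α` splits the exponent into a random part, which factorizes by
independence and contributes `(1 + 2e^{-A/2})^n ≤ exp(2n e^{-A/2}) ≤ e^2`, and a deterministic
part `λ^α Σ (E|Y_i|)^α ≤ n A e^{-αA/2} ≤ 6`.
-/

open MeasureTheory ProbabilityTheory Real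
open scoped ENNReal

noncomputable def tailPart (M x : ℝ) : ℝ := if M < |x| then x else 0

lemma measurable_tailPart (M : ℝ) : Measurable (tailPart M) :=
  Measurable.ite (measurableSet_lt measurable_const measurable_abs) measurable_id measurable_const

lemma tailPart_eq_zero {M x : ℝ} (h : ¬ M < |x|) : tailPart M x = 0 := if_neg h

lemma tailPart_eq_self {M x : ℝ} (h : M < |x|) : tailPart M x = x := if_pos h

lemma rpow_inv_le_mul_exp {α A u : ℝ} (hA : 0 < A) (hαA : 2 ≤ α * A) (hu : A ≤ u) :
    u ^ (1 / α) ≤ A ^ (1 / α) * exp (-(A / 2)) * exp u := by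
  have hα : 0 < α := pos_of_mul_pos_left (by linarith) hA.le
  have hu0 : 0 < u / A := div_pos (hA.trans_le hu) hA
  have hexp : (u - A) / (α * A) ≤ (u - A) / 2 :=
    div_le_div_of_nonneg_left (by linarith) (by norm_num) hαA
  have hratio : (u / A) ^ (1 / α) ≤ exp (u - A / 2) := by
    rw [rpow_def_of_pos hu0, exp_le_exp]
    calc log (u / A) * (1 / α) ≤ (u / A - 1) * (1 / α) :=
          mul_le_mul_of_nonneg_right (log_le_sub_one_of_pos hu0) (by positivity)
      _ = (u - A) / (α * A) := by field_simp
      _ ≤ u - A / 2 := by linarith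
  calc u ^ (1 / α) = A ^ (1 / α) * (u / A) ^ (1 / α) := by
        rw [← mul_rpow hA.le hu0.le, mul_div_cancel₀ _ hA.ne']
    _ ≤ A ^ (1 / α) * exp (u - A / 2) := by gcongr
    _ = A ^ (1 / α) * exp (-(A / 2)) * exp u := by rw [mul_assoc, ← exp_add]; ring_nf

lemma mul_rpow_one_div_rpow {α c A : ℝ} (hα : α ≠ 0) (hc : 0 ≤ c) (hA : 0 ≤ A) :
    (c * A ^ (1 / α)) ^ α = c ^ α * A := by
  rw [mul_rpow hc (by positivity), ← rpow_mul hA, one_div_mul_cancel hα, rpow_one]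

lemma rpow_le_one_div_two_mul_rpow {α c lam : ℝ} (hα : 0 < α) (hc : 0 < c) (hlam0 : 0 ≤ lam)
    (hlam : lam ≤ 1 / (2 ^ (1 / α) * c)) : lam ^ α ≤ 1 / (2 * c ^ α) :=
  calc lam ^ α ≤ (1 / (2 ^ (1 / α) * c)) ^ α := by gcongr
    _ = 1 / (2 * c ^ α) := by
      rw [div_rpow zero_le_one (by positivity), one_rpow, mul_comm,
        mul_rpow_one_div_rpow hα.ne' hc.le zero_le_two, mul_comm]

section Pointwise

variable {α c A M : ℝ} (hα : 0 < α) (hc : 0 < c) (hM : M = c * A ^ (1 / α))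
include hα hc hM

lemma le_rpow_div_rpow_of_lt (hA : 0 ≤ A) {x : ℝ} (hx : M < |x|) :
    A ≤ |x| ^ α / c ^ α := by
  rw [le_div_iff₀ (by positivity), mul_comm, ← mul_rpow_one_div_rpow hα.ne' hc.le hA, ← hM]
  exact rpow_le_rpow (by rw [hM]; positivity) hx.le hα.le

lemma abs_tailPart_le (hA : 0 < A) (hαA : 2 ≤ α * A) (x : ℝ) :
    |tailPart M x| ≤ M * exp (-(A / 2)) * exp (|x| ^ α / c ^ α) := by
  by_cases hx : M < |x|
  · have habs : |x| = c * (|x| ^ α / c ^ α) ^ (1 / α) := by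
      rw [div_rpow (by positivity) (by positivity), ← rpow_mul (abs_nonneg x),
        ← rpow_mul hc.le, mul_one_div_cancel hα.ne', rpow_one, rpow_one, mul_div_cancel₀ _ hc.ne']
    calc |tailPart M x| = c * (|x| ^ α / c ^ α) ^ (1 / α) := by rw [tailPart_eq_self hx, ← habs]
      _ ≤ c * (A ^ (1 / α) * exp (-(A / 2)) * exp (|x| ^ α / c ^ α)) := by
        gcongr
        exact rpow_inv_le_mul_exp hA hαA (le_rpow_div_rpow_of_lt hα hc hM hA.le hx)
      _ = M * exp (-(A / 2)) * exp (|x| ^ α / c ^ α) := by rw [hM]; ring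
  · rw [tailPart_eq_zero hx, abs_zero, hM]
    positivity

lemma exp_mul_abs_tailPart_rpow_le (hA : 0 ≤ A) {s : ℝ} (hs : s ≤ 1 / (2 * c ^ α)) (x : ℝ) :
    exp (s * |tailPart M x| ^ α) ≤ 1 + exp (-(A / 2)) * exp (|x| ^ α / c ^ α) := by
  by_cases hx : M < |x|
  · have hu := le_rpow_div_rpow_of_lt hα hc hM hA hx
    have hsx : s * |x| ^ α ≤ (|x| ^ α / c ^ α) / 2 := by
      calc s * |x| ^ α ≤ 1 / (2 * c ^ α) * |x| ^ α := by gcongr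
        _ = (|x| ^ α / c ^ α) / 2 := by field_simp
    rw [tailPart_eq_self hx, ← exp_add]
    linarith [exp_le_exp.2 (show s * |x| ^ α ≤ -(A / 2) + |x| ^ α / c ^ α by linarith)]
  · rw [tailPart_eq_zero hx, abs_zero, zero_rpow hα.ne', mul_zero, exp_zero]
    have : 0 ≤ exp (-(A / 2)) * exp (|x| ^ α / c ^ α) := by positivity
    linarith

lemma mul_rpow_le_of_le_two_mul (hα1 : α ≤ 1) (hA : 0 ≤ A) {s m : ℝ}
    (hs : s ≤ 1 / (2 * c ^ α)) (hm0 : 0 ≤ m) (hm : m ≤ 2 * (M * exp (-(A / 2)))) :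
    s * m ^ α ≤ A * exp (-(α * A / 2)) := by
  have hMα : M ^ α = c ^ α * A := by rw [hM, mul_rpow_one_div_rpow hα.ne' hc.le hA]
  have h2α : (2 : ℝ) ^ α ≤ 2 := by
    simpa using rpow_le_rpow_of_exponent_le one_le_two hα1
  have hM0 : 0 ≤ M := by rw [hM]; positivity
  calc s * m ^ α ≤ 1 / (2 * c ^ α) * (2 * (M * exp (-(A / 2)))) ^ α := by gcongr
    _ = 2 ^ α / 2 * (A * exp (-(α * A / 2))) := by
      rw [mul_rpow (by norm_num) (by positivity), mul_rpow hM0 (by positivity), hMα,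
        ← exp_mul]
      field_simp
    _ ≤ A * exp (-(α * A / 2)) := by
      have : 0 ≤ A * exp (-(α * A / 2)) := by positivity
      nlinarith

end Pointwise

section Probability

variable {Ω : Type*} [MeasurableSpace Ω] {P : Measure Ω}

lemma lintegral_ofReal_le_add_mul [IsProbabilityMeasure P] {f g : Ω → ℝ} (hg : Measurable g)
    (hg0 : ∀ ω, 0 ≤ g ω) {a b C : ℝ} (ha : 0 ≤ a) (hb : 0 ≤ b) (hC : 0 ≤ C)
    (hgC : ∫⁻ ω, ENNReal.ofReal (g ω) ∂P ≤ ENNReal.ofReal C) (hfg : ∀ ω, f ω ≤ a + b * g ω) :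
    ∫⁻ ω, ENNReal.ofReal (f ω) ∂P ≤ ENNReal.ofReal (a + b * C) := by
  calc ∫⁻ ω, ENNReal.ofReal (f ω) ∂P
      ≤ ∫⁻ ω, ENNReal.ofReal a + ENNReal.ofReal b * ENNReal.ofReal (g ω) ∂P := by
        refine lintegral_mono fun ω ↦ ?_
        rw [← ENNReal.ofReal_mul hb, ← ENNReal.ofReal_add ha (mul_nonneg hb (hg0 ω))]
        exact ENNReal.ofReal_le_ofReal (hfg ω)
    _ = ENNReal.ofReal a + ENNReal.ofReal b * ∫⁻ ω, ENNReal.ofReal (g ω) ∂P := by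
        rw [lintegral_add_left measurable_const, lintegral_const_mul _ hg.ennreal_ofReal,
          lintegral_const, measure_univ, mul_one]
    _ ≤ ENNReal.ofReal a + ENNReal.ofReal b * ENNReal.ofReal C := by gcongr
    _ = ENNReal.ofReal (a + b * C) := by
        rw [← ENNReal.ofReal_mul hb, ← ENNReal.ofReal_add ha (mul_nonneg hb hC)]

lemma lintegral_exp_sum_rpow_add_le {ι : Type*} [Fintype ι] {X : ι → Ω → ℝ}
    (hX : ∀ i, Measurable (X i)) (hind : iIndepFun X P) {α s : ℝ} (hα0 : 0 ≤ α) (hα1 : α ≤ 1)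
    (hs : 0 ≤ s) {m a : ι → ℝ} (hm : ∀ i, 0 ≤ m i) (ha : ∀ i, 0 ≤ a i)
    (hXa : ∀ i, ∫⁻ ω, ENNReal.ofReal (exp (s * |X i ω| ^ α)) ∂P ≤ ENNReal.ofReal (1 + a i)) :
    ∫⁻ ω, ENNReal.ofReal (exp (s * ∑ i, (|X i ω| + m i) ^ α)) ∂P
      ≤ ENNReal.ofReal (exp (∑ i, a i + ∑ i, s * m i ^ α)) := by
  set F : ι → Ω → ℝ≥0∞ := fun i ω ↦ ENNReal.ofReal (exp (s * |X i ω| ^ α))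
  have hg : Measurable fun x : ℝ ↦ ENNReal.ofReal (exp (s * |x| ^ α)) := by fun_prop
  have hF : ∀ i, Measurable (F i) := fun i ↦ hg.comp (hX i)
  have hFind : iIndepFun F P := hind.comp _ fun _ ↦ hg
  have hpointwise : ∀ ω, ENNReal.ofReal (exp (s * ∑ i, (|X i ω| + m i) ^ α))
      ≤ (∏ i, F i ω) * ENNReal.ofReal (exp (∑ i, s * m i ^ α)) := by
    intro ω
    have hsub : s * ∑ i, (|X i ω| + m i) ^ α ≤ ∑ i, s * |X i ω| ^ α + ∑ i, s * m i ^ α := by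
      rw [Finset.mul_sum, ← Finset.sum_add_distrib]
      gcongr with i
      rw [← mul_add]
      gcongr
      exact rpow_add_le_add_rpow (abs_nonneg _) (hm i) hα0 hα1
    rw [← ENNReal.ofReal_prod_of_nonneg fun i _ ↦ (exp_pos _).le, ← exp_sum,
      ← ENNReal.ofReal_mul (exp_pos _).le, ← exp_add]
    exact ENNReal.ofReal_le_ofReal (exp_le_exp.2 hsub)
  calc ∫⁻ ω, ENNReal.ofReal (exp (s * ∑ i, (|X i ω| + m i) ^ α)) ∂P
      ≤ ∫⁻ ω, (∏ i, F i ω) * ENNReal.ofReal (exp (∑ i, s * m i ^ α)) ∂P :=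
        lintegral_mono hpointwise
    _ = (∏ i, ∫⁻ ω, F i ω ∂P) * ENNReal.ofReal (exp (∑ i, s * m i ^ α)) := by
        rw [lintegral_mul_const _ (Finset.measurable_prod _ fun i _ ↦ hF i),
          lintegral_prod_eq_prod_lintegral_of_indepFun _ _ hFind hF]
    _ ≤ ENNReal.ofReal (∏ i, (1 + a i)) * ENNReal.ofReal (exp (∑ i, s * m i ^ α)) := by
        rw [ENNReal.ofReal_prod_of_nonneg fun i _ ↦ by linarith [ha i]]
        gcongr with i
        exact hXa i
    _ ≤ ENNReal.ofReal (exp (∑ i, a i)) * ENNReal.ofReal (exp (∑ i, s * m i ^ α)) := by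
        gcongr
        exact prod_one_add_le_exp_sum _ ha
    _ = ENNReal.ofReal (exp (∑ i, a i + ∑ i, s * m i ^ α)) := by
        rw [← ENNReal.ofReal_mul (exp_pos _).le, ← exp_add]

lemma measurable_exp_abs_rpow_div {X : Ω → ℝ} (hX : Measurable X) (α c : ℝ) :
    Measurable fun ω ↦ exp (|X ω| ^ α / c ^ α) := by
  fun_prop

section Tail

variable [IsProbabilityMeasure P] {α c A M : ℝ} (hα : 0 < α) (hc : 0 < c)
  (hM : M = c * A ^ (1 / α)) {X : Ω → ℝ} (hX : Measurable X)
   (hψ : ∫⁻ ω, ENNReal.ofReal (exp (|X ω| ^ α / c ^ α)) ∂P ≤ 2)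
include hα hc hM hX hψ

lemma integral_abs_tailPart_le (hA : 0 < A) (hαA : 2 ≤ α * A) :
    ∫ ω, |tailPart M (X ω)| ∂P ≤ 2 * (M * exp (-(A / 2))) := by
  have hM0 : 0 ≤ M := by rw [hM]; positivity
  have hlin : ∫⁻ ω, ENNReal.ofReal |tailPart M (X ω)| ∂P
      ≤ ENNReal.ofReal (2 * (M * exp (-(A / 2)))) := by
    refine (lintegral_ofReal_le_add_mul (a := 0) (b := M * exp (-(A / 2)))
      (measurable_exp_abs_rpow_div hX α c)
      (fun _ ↦ (exp_pos _).le) le_rfl (by positivity) zero_le_two (by simpa using hψ)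
      fun ω ↦ ?_).trans_eq (by ring_nf)
    simpa using abs_tailPart_le hα hc hM hA hαA (X ω)
  have hmeas : Measurable fun ω ↦ |tailPart M (X ω)| := ((measurable_tailPart M).comp hX).abs
  rw [integral_eq_lintegral_of_nonneg_ae (ae_of_all _ fun _ ↦ abs_nonneg _)
    hmeas.aestronglyMeasurable]
  exact ENNReal.toReal_le_of_le_ofReal (by positivity) hlin

lemma lintegral_exp_mul_abs_tailPart_rpow_le (hA : 0 ≤ A) {s : ℝ}
    (hs : s ≤ 1 / (2 * c ^ α)) :
    ∫⁻ ω, ENNReal.ofReal (exp (s * |tailPart M (X ω)| ^ α)) ∂P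
      ≤ ENNReal.ofReal (1 + 2 * exp (-(A / 2))) := by
  rw [mul_comm 2]
  exact lintegral_ofReal_le_add_mul (measurable_exp_abs_rpow_div hX α c)
    (fun _ ↦ (exp_pos _).le) zero_le_one (exp_pos _).le zero_le_two (by simpa using hψ)
    fun ω ↦ exp_mul_abs_tailPart_rpow_le hα hc hM hA hs (X ω)

end Tail

end Probability

lemma mul_exp_neg_half_le_one {N L A : ℝ} (hN : N ≤ exp L) (hLA : 2 * L ≤ A) :
    N * exp (-(A / 2)) ≤ 1 := by
  calc N * exp (-(A / 2)) ≤ exp L * exp (-L) := by gcongr; linarith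
    _ = 1 := by rw [← exp_add, add_neg_cancel, exp_zero]

lemma mul_sq_mul_exp_le_six {N t L : ℝ} (hN : N ≤ exp L) (ht : 1 ≤ t)
    (hL : 1 ≤ L) : N * (3 * t ^ 2 * L * exp (-(3 * t * L / 2))) ≤ 6 := by
  have ht' : t ^ 2 ≤ 16 / 9 * exp (3 * t / 2 - 2) := by
    calc t ^ 2 ≤ (4 / 3 * exp (3 * t / 4 - 1)) ^ 2 := by
          gcongr; linarith [add_one_le_exp (3 * t / 4 - 1)]
      _ = 16 / 9 * exp (3 * t / 2 - 2) := by rw [mul_pow, ← exp_nat_mul]; ring_nf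
  have hL' : L ≤ 2 * exp (L / 2 - 1) := by linarith [add_one_le_exp (L / 2 - 1)]
  have he : 5 / 2 ≤ exp (3 / 2) := by linarith [add_one_le_exp (3 / 2)]
  -- the exponent below equals `-(3/2) * ((t - 1) * (L - 1) + 1)`
  have hexp : L + (3 * t / 2 - 2) + (L / 2 - 1) - 3 * t * L / 2 ≤ -(3 / 2) := by
    nlinarith [mul_nonneg (sub_nonneg.2 ht) (sub_nonneg.2 hL)]
  calc N * (3 * t ^ 2 * L * exp (-(3 * t * L / 2)))
      ≤ exp L * (3 * (16 / 9 * exp (3 * t / 2 - 2)) * (2 * exp (L / 2 - 1))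
          * exp (-(3 * t * L / 2))) := by gcongr
    _ = 32 / 3 * exp (L + (3 * t / 2 - 2) + (L / 2 - 1) - 3 * t * L / 2) := by
        simp only [sub_eq_add_neg _ (3 * t * L / 2), exp_add]; ring
    _ ≤ 32 / 3 * exp (-(3 / 2)) := by gcongr
    _ ≤ 6 := by
        rw [exp_neg]
        have : (exp (3 / 2))⁻¹ ≤ (5 / 2)⁻¹ := inv_anti₀ (by norm_num) he
        linarith

theorem stmt_1_general {Ω : Type*} [MeasurableSpace Ω] (P : Measure Ω) [IsProbabilityMeasure P]
    (n : ℕ) (α c : ℝ) (hα : 0 < α) (hα1 : α ≤ 1) (hc : 0 < c)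
    (ξ : Fin n → Ω → ℝ) (hmeas : ∀ i, Measurable (ξ i))
    (hindep : iIndepFun ξ P)
    (hψ : ∀ i, ∫⁻ ω, ENNReal.ofReal (Real.exp (|ξ i ω| ^ α / c ^ α)) ∂P ≤ 2)
    (M : ℝ) (hM : M = c * (3 * α⁻¹ ^ 2 * Real.log (max (n : ℝ) (Real.exp 1))) ^ (1 / α))
    (Y : Fin n → Ω → ℝ) (hY : ∀ i ω, Y i ω = if M < |ξ i ω| then ξ i ω else 0)
    (lam : ℝ) (hlam0 : 0 ≤ lam) (hlam : lam ≤ 1 / ((2 : ℝ) ^ (1 / α) * c)) :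
    ∫⁻ ω, ENNReal.ofReal
        (Real.exp (lam ^ α * ∑ i : Fin n, (|Y i ω| + ∫ ω', |Y i ω'| ∂P) ^ α)) ∂P
      ≤ ENNReal.ofReal (Real.exp 8) := by
  obtain rfl : Y = fun i ω ↦ tailPart M (ξ i ω) := funext₂ hY
  set L := log (max (n : ℝ) (exp 1))
  set A := 3 * α⁻¹ ^ 2 * L
  have hL : 1 ≤ L := by simpa using log_le_log (exp_pos 1) (le_max_right (n : ℝ) (exp 1))
  have hnL : (n : ℝ) ≤ exp L := by rw [exp_log (by positivity)]; exact le_max_left _ _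
  have ht : 1 ≤ α⁻¹ := one_le_inv_iff₀.mpr ⟨hα, hα1⟩
  have hαA : α * A = 3 * α⁻¹ * L := by simp only [A]; field_simp
  have hαA2 : 2 ≤ α * A := by rw [hαA]; nlinarith
  have hs := rpow_le_one_div_two_mul_rpow hα hc hlam0 hlam
  have hm i : ∫ ω, |tailPart M (ξ i ω)| ∂P ≤ 2 * (M * exp (-(A / 2))) :=
    integral_abs_tailPart_le hα hc hM (hmeas i) (hψ i) (by positivity) hαA2
  calc _ ≤ ENNReal.ofReal (exp (∑ _i : Fin n, 2 * exp (-(A / 2))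
          + ∑ i, lam ^ α * (∫ ω, |tailPart M (ξ i ω)| ∂P) ^ α)) :=
        lintegral_exp_sum_rpow_add_le (fun i ↦ (measurable_tailPart M).comp (hmeas i))
          (hindep.comp _ fun _ ↦ measurable_tailPart M) hα.le hα1 (by positivity)
          (fun _ ↦ integral_nonneg fun _ ↦ abs_nonneg _) (fun _ ↦ by positivity)
          fun i ↦ lintegral_exp_mul_abs_tailPart_rpow_le hα hc hM (hmeas i) (hψ i)
            (by positivity) hs
    _ ≤ ENNReal.ofReal (exp (2 + 6)) := by
        gcongr
        · have := mul_exp_neg_half_le_one (A := A) hnL (by nlinarith)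
          simp only [Finset.sum_const, Finset.card_univ, Fintype.card_fin, nsmul_eq_mul]
          linarith
        · calc ∑ i, lam ^ α * (∫ ω, |tailPart M (ξ i ω)| ∂P) ^ α
              ≤ ∑ _i : Fin n, A * exp (-(α * A / 2)) := Finset.sum_le_sum fun i _ ↦
                mul_rpow_le_of_le_two_mul hα hc hM hα1 (by positivity) hs
                  (integral_nonneg fun _ ↦ abs_nonneg _) (hm i)
            _ ≤ 6 := by
              rw [Finset.sum_const, Finset.card_univ, Fintype.card_fin, nsmul_eq_mul, hαA]
              exact mul_sq_mul_exp_le_six hnL ht hL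
    _ = ENNReal.ofReal (exp 8) := by norm_num

/-- Truncation lemma: if `ξ_0, …, ξ_{n−1}` are i.i.d. with
`E exp(c^{−α}|ξ_i|^α) ≤ 2`, `α ∈ (0,1]`, `c > 0`,
`M = c (3 α^{−2} log n)^{1/α}` (with `log n := log (max n e)`) and
`Y_i = ξ_i 1_{|ξ_i| > M}`, then for every `0 ≤ λ ≤ 1/(2^{1/α} c)`,
`E exp(λ^α Σ_{i<n} (|Y_i| + E|Y_i|)^α) ≤ e^8`. -/
theorem stmt_1 {Ω : Type*} [MeasurableSpace Ω] (P : Measure Ω) [IsProbabilityMeasure P]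
    (n : ℕ) (hn : 0 < n) (α c : ℝ) (hα : 0 < α) (hα1 : α ≤ 1) (hc : 0 < c)
    (ξ : Fin n → Ω → ℝ) (hmeas : ∀ i, Measurable (ξ i))
    (hindep : iIndepFun ξ P)
    (hident : ∀ i j, IdentDistrib (ξ i) (ξ j) P P)
    (hψ : ∀ i, ∫⁻ ω, ENNReal.ofReal (Real.exp (|ξ i ω| ^ α / c ^ α)) ∂P ≤ 2)
    (M : ℝ) (hM : M = c * (3 * α⁻¹ ^ 2 * Real.log (max (n : ℝ) (Real.exp 1))) ^ (1 / α))
    (Y : Fin n → Ω → ℝ) (hY : ∀ i ω, Y i ω = if M < |ξ i ω| then ξ i ω else 0)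
    (lam : ℝ) (hlam0 : 0 ≤ lam) (hlam : lam ≤ 1 / ((2 : ℝ) ^ (1 / α) * c)) :
    ∫⁻ ω, ENNReal.ofReal
        (Real.exp (lam ^ α * ∑ i : Fin n, (|Y i ω| + ∫ ω', |Y i ω'| ∂P) ^ α)) ∂P
      ≤ ENNReal.ofReal (Real.exp 8) :=
  stmt_1_general P n α c hα hα1 hc ξ hmeas hindep hψ M hM Y hY lam hlam0 hlam
end

section
/- For every α ∈ (0,1] and all real random variables X, Y defined on the same probability space, ‖X + Y‖_{ψ_α} ≤ ( ‖X‖_{ψ_α}^α + ‖Y‖_{ψ_α}^α )^{1/α}, with the conventions that the right-hand side is +∞ if either norm is infinite. -/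
open MeasureTheory Real

/-- The exponential Orlicz norm `‖Y‖_{ψ_α}` (with `inf ∅ = ∞`), as an element of `[0,∞]`. -/
noncomputable def psiNorm {Ω : Type*} [MeasurableSpace Ω] (P : Measure Ω) (α : ℝ)
    (Y : Ω → ℝ) : ENNReal :=
  sInf {c : ENNReal | ∃ r : ℝ, 0 < r ∧ c = ENNReal.ofReal r ∧
    ∫⁻ ω, ENNReal.ofReal (Real.exp (|Y ω| ^ α / r ^ α)) ∂P ≤ 2}

/-!
For `0 < α ≤ 1` the map `t ↦ |t|^α` is subadditive, so with `p = r^α`, `q = s^α`,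
`|X + Y|^α / (p + q) ≤ (p/(p+q)) (|X|^α/p) + (q/(p+q)) (|Y|^α/q)`, and convexity of `exp` turns
`E exp(|X|^α/r^α) ≤ 2` and `E exp(|Y|^α/s^α) ≤ 2` into the same bound for `X + Y` at the radius
`(r^α + s^α)^{1/α}`. Taking infima over `r` and `s` (which commute with `^α` and with `+` in `[0,∞]`) gives the
inequality.
-/

lemma Real.exp_div_add_le {p q : ℝ} (hp : 0 < p) (hq : 0 < q) (u v : ℝ) :
    exp ((u + v) / (p + q)) ≤ p / (p + q) * exp (u / p) + q / (p + q) * exp (v / q) := by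
  have hpq : 0 < p + q := by linarith
  have hweights : p / (p + q) + q / (p + q) = 1 := by field_simp
  have hsplit : (u + v) / (p + q) = p / (p + q) * (u / p) + q / (p + q) * (v / q) := by
    field_simp
  rw [hsplit]
  exact convexOn_exp.2 (Set.mem_univ _) (Set.mem_univ _) (by positivity) (by positivity) hweights

lemma ENNReal.le_rpow_add_rpow_sInf {α : ℝ} (hα : 0 < α) {S T : Set ENNReal} {z : ENNReal}
    (h : ∀ c ∈ S, ∀ d ∈ T, z ^ α ≤ c ^ α + d ^ α) :
    z ≤ (sInf S ^ α + sInf T ^ α) ^ (1 / α) := by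
  have rpow_sInf : ∀ U : Set ENNReal, sInf U ^ α = ⨅ c : U, (c : ENNReal) ^ α := fun U => by
    rw [sInf_eq_iInf']
    exact (orderIsoRpow α hα).map_iInf _
  rw [one_div, le_rpow_inv_iff hα, rpow_sInf, rpow_sInf]
  exact le_iInf_add_iInf fun c d => h c c.2 d d.2

section Integral

variable {Ω : Type*} [MeasurableSpace Ω] {P : Measure Ω}

lemma lintegral_exp_div_add_le {f g h : Ω → ℝ} (hf : Measurable f) {p q : ℝ} (hp : 0 < p)
    (hq : 0 < q) (hh : ∀ ω, h ω ≤ f ω + g ω) {C : ENNReal}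
    (hfC : ∫⁻ ω, ENNReal.ofReal (exp (f ω / p)) ∂P ≤ C)
    (hgC : ∫⁻ ω, ENNReal.ofReal (exp (g ω / q)) ∂P ≤ C) :
    ∫⁻ ω, ENNReal.ofReal (exp (h ω / (p + q))) ∂P ≤ C := by
  have hpq : 0 < p + q := by linarith
  have hweights : ENNReal.ofReal (p / (p + q)) + ENNReal.ofReal (q / (p + q)) = 1 := by
    rw [← ENNReal.ofReal_add (by positivity) (by positivity), ← add_div, div_self hpq.ne',
      ENNReal.ofReal_one]
  have hpointwise : ∀ ω, ENNReal.ofReal (exp (h ω / (p + q))) ≤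
      ENNReal.ofReal (p / (p + q)) * ENNReal.ofReal (exp (f ω / p)) +
        ENNReal.ofReal (q / (p + q)) * ENNReal.ofReal (exp (g ω / q)) := fun ω => by
    rw [← ENNReal.ofReal_mul (by positivity), ← ENNReal.ofReal_mul (by positivity),
      ← ENNReal.ofReal_add (by positivity) (by positivity)]
    refine ENNReal.ofReal_le_ofReal ?_
    calc exp (h ω / (p + q)) ≤ exp ((f ω + g ω) / (p + q)) := by gcongr; exact hh ω
      _ ≤ _ := exp_div_add_le hp hq _ _
  have hmeas : Measurable fun ω => ENNReal.ofReal (exp (f ω / p)) := by fun_prop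
  calc ∫⁻ ω, ENNReal.ofReal (exp (h ω / (p + q))) ∂P
      ≤ ∫⁻ ω, (ENNReal.ofReal (p / (p + q)) * ENNReal.ofReal (exp (f ω / p)) +
          ENNReal.ofReal (q / (p + q)) * ENNReal.ofReal (exp (g ω / q))) ∂P :=
        lintegral_mono hpointwise
    _ = ENNReal.ofReal (p / (p + q)) * ∫⁻ ω, ENNReal.ofReal (exp (f ω / p)) ∂P +
          ENNReal.ofReal (q / (p + q)) * ∫⁻ ω, ENNReal.ofReal (exp (g ω / q)) ∂P := by
        rw [lintegral_add_left (hmeas.const_mul _), lintegral_const_mul _ hmeas,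
          lintegral_const_mul' _ _ ENNReal.ofReal_ne_top]
    _ ≤ ENNReal.ofReal (p / (p + q)) * C + ENNReal.ofReal (q / (p + q)) * C := by gcongr
    _ = C := by rw [← add_mul, hweights, one_mul]

lemma psiNorm_le_ofReal {α r : ℝ} {Y : Ω → ℝ} (hr : 0 < r)
    (hY : ∫⁻ ω, ENNReal.ofReal (exp (|Y ω| ^ α / r ^ α)) ∂P ≤ 2) :
    psiNorm P α Y ≤ ENNReal.ofReal r :=
  sInf_le ⟨r, hr, rfl, hY⟩

lemma psiNorm_add_rpow_le {α : ℝ} (hα : 0 < α) (hα1 : α ≤ 1) {X Y : Ω → ℝ} (hX : Measurable X)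
    {r s : ℝ} (hr : 0 < r) (hs : 0 < s)
    (hXr : ∫⁻ ω, ENNReal.ofReal (exp (|X ω| ^ α / r ^ α)) ∂P ≤ 2)
    (hYs : ∫⁻ ω, ENNReal.ofReal (exp (|Y ω| ^ α / s ^ α)) ∂P ≤ 2) :
    psiNorm P α (fun ω => X ω + Y ω) ^ α ≤ ENNReal.ofReal r ^ α + ENNReal.ofReal s ^ α := by
  have hsum : 0 < r ^ α + s ^ α := by positivity
  set t := (r ^ α + s ^ α) ^ (1 / α)
  have ht : t ^ α = r ^ α + s ^ α := by
    rw [← rpow_mul hsum.le, one_div_mul_cancel hα.ne', rpow_one]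
  have hsubadd : ∀ ω, |X ω + Y ω| ^ α ≤ |X ω| ^ α + |Y ω| ^ α := fun ω =>
    (rpow_le_rpow (abs_nonneg _) (abs_add_le _ _) hα.le).trans
      (rpow_add_le_add_rpow (abs_nonneg _) (abs_nonneg _) hα.le hα1)
  have hXY : psiNorm P α (fun ω => X ω + Y ω) ≤ ENNReal.ofReal t := by
    refine psiNorm_le_ofReal (by positivity) ?_
    rw [ht]
    exact lintegral_exp_div_add_le (by fun_prop) (by positivity) (by positivity) hsubadd hXr hYs
  calc psiNorm P α (fun ω => X ω + Y ω) ^ α ≤ ENNReal.ofReal t ^ α := by gcongr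
    _ = ENNReal.ofReal r ^ α + ENNReal.ofReal s ^ α := by
      rw [ENNReal.ofReal_rpow_of_pos (by positivity), ht,
        ENNReal.ofReal_add (by positivity) (by positivity),
        ENNReal.ofReal_rpow_of_pos hr, ENNReal.ofReal_rpow_of_pos hs]

end Integral

theorem stmt_8_general {Ω : Type*} [MeasurableSpace Ω] (P : Measure Ω)
    (α : ℝ) (hα : 0 < α) (hα1 : α ≤ 1)
    (X Y : Ω → ℝ) (hX : Measurable X) :
    psiNorm P α (fun ω => X ω + Y ω)
      ≤ (psiNorm P α X ^ α + psiNorm P α Y ^ α) ^ (1 / α) := by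
  refine ENNReal.le_rpow_add_rpow_sInf hα ?_
  rintro _ ⟨r, hr, rfl, hXr⟩ _ ⟨s, hs, rfl, hYs⟩
  exact psiNorm_add_rpow_le hα hα1 hX hr hs hXr hYs

/-- Quasi-triangle inequality for exponential Orlicz norms:
`‖X + Y‖_{ψ_α} ≤ (‖X‖_{ψ_α}^α + ‖Y‖_{ψ_α}^α)^{1/α}` for `α ∈ (0,1]`,
the inequality being interpreted in `[0,∞]`. -/
theorem stmt_8 {Ω : Type*} [MeasurableSpace Ω] (P : Measure Ω) [IsProbabilityMeasure P]
    (α : ℝ) (hα : 0 < α) (hα1 : α ≤ 1)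
    (X Y : Ω → ℝ) (hX : Measurable X) (hY : Measurable Y) :
    psiNorm P α (fun ω => X ω + Y ω)
      ≤ (psiNorm P α X ^ α + psiNorm P α Y ^ α) ^ (1 / α) :=
  stmt_8_general P α hα hα1 X Y hX
end

section
/- Let p, q > 1 satisfy 1/p + 1/q = 1. Then for all real random variables X, Y defined on the same probability space, ‖XY‖_{ψ_1} ≤ ‖X‖_{ψ_p} · ‖Y‖_{ψ_q}, the inequality being interpreted in [0,∞]. -/
/-
Pointwise, Young's inequality `xy ≤ x^p/p + y^q/q` followed by convexity of `exp` gives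
`exp (x y) ≤ exp (x^p) / p + exp (y^q) / q` for `x, y ≥ 0`. Applied to `x = |X|/r`, `y = |Y|/s`
and integrated, it shows that if `r` is admissible for `‖X‖_{ψ_p}` and `s` for `‖Y‖_{ψ_q}`,
then `r s` is admissible for `‖XY‖_{ψ_1}`. Taking infima gives the inequality, except when one
norm is `0` and the other `∞`; but a vanishing `ψ_α` norm forces the variable to vanish a.e.
(since `|Y|^α ≤ r^α exp (|Y|^α / r^α)`), and then `‖XY‖_{ψ_1} = 0`.
-/

open MeasureTheory Real

open Filter Topology

theorem Real.exp_mul_le_of_holderConjugate {p q x y : ℝ} (hpq : p.HolderConjugate q)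
    (hx : 0 ≤ x) (hy : 0 ≤ y) :
    exp (x * y) ≤ p⁻¹ * exp (x ^ p) + q⁻¹ * exp (y ^ q) :=
  calc exp (x * y) ≤ exp (p⁻¹ * x ^ p + q⁻¹ * y ^ q) := by
        gcongr
        simpa only [div_eq_inv_mul] using young_inequality_of_nonneg hx hy hpq
    _ ≤ p⁻¹ * exp (x ^ p) + q⁻¹ * exp (y ^ q) :=
        convexOn_exp.2 (Set.mem_univ _) (Set.mem_univ _) hpq.inv_nonneg hpq.symm.inv_nonneg
          hpq.inv_add_inv_eq_one

section PsiAdmissible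

variable {Ω : Type*} [MeasurableSpace Ω] {P : Measure Ω} {α : ℝ} {Y : Ω → ℝ} {r s : ℝ}

def PsiAdmissible (P : Measure Ω) (α : ℝ) (Y : Ω → ℝ) (r : ℝ) : Prop :=
  0 < r ∧ ∫⁻ ω, ENNReal.ofReal (exp (|Y ω| ^ α / r ^ α)) ∂P ≤ 2

theorem psiNorm_le_ofReal_s10 (h : PsiAdmissible P α Y r) : psiNorm P α Y ≤ ENNReal.ofReal r :=
  sInf_le ⟨r, h.1, rfl, h.2⟩

theorem exists_psiAdmissible_lt {a : ENNReal} (h : psiNorm P α Y < a) :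
    ∃ r, PsiAdmissible P α Y r ∧ ENNReal.ofReal r < a := by
  obtain ⟨_, ⟨r, hr, rfl, hint⟩, hlt⟩ := sInf_lt_iff.1 h
  exact ⟨r, ⟨hr, hint⟩, hlt⟩

theorem PsiAdmissible.mono (hα : 0 ≤ α) (h : PsiAdmissible P α Y s) (hsr : s ≤ r) :
    PsiAdmissible P α Y r := by
  refine ⟨h.1.trans_le hsr, le_trans (lintegral_mono fun ω => ?_) h.2⟩
  gcongr
  exacts [rpow_pos_of_pos h.1 α, h.1.le]

theorem psiAdmissible_of_psiNorm_eq_zero (hα : 0 ≤ α) (h : psiNorm P α Y = 0) (hr : 0 < r) :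
    PsiAdmissible P α Y r := by
  obtain ⟨s, hs, hsr⟩ := exists_psiAdmissible_lt (h ▸ ENNReal.ofReal_pos.2 hr)
  exact hs.mono hα ((ENNReal.ofReal_lt_ofReal_iff hr).1 hsr).le

theorem PsiAdmissible.lintegral_rpow_le (h : PsiAdmissible P α Y r) :
    ∫⁻ ω, ENNReal.ofReal (|Y ω| ^ α) ∂P ≤ 2 * ENNReal.ofReal (r ^ α) := by
  have hrα : 0 < r ^ α := rpow_pos_of_pos h.1 α
  calc ∫⁻ ω, ENNReal.ofReal (|Y ω| ^ α) ∂P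
      ≤ ∫⁻ ω, ENNReal.ofReal (r ^ α) * ENNReal.ofReal (exp (|Y ω| ^ α / r ^ α)) ∂P := by
        refine lintegral_mono fun ω => ?_
        rw [← ENNReal.ofReal_mul hrα.le]
        refine ENNReal.ofReal_le_ofReal ?_
        calc |Y ω| ^ α = r ^ α * (|Y ω| ^ α / r ^ α) := by field_simp
          _ ≤ r ^ α * exp (|Y ω| ^ α / r ^ α) := by
            gcongr
            exact (lt_add_one _).le.trans (add_one_le_exp _)
    _ = ENNReal.ofReal (r ^ α) * ∫⁻ ω, ENNReal.ofReal (exp (|Y ω| ^ α / r ^ α)) ∂P :=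
        lintegral_const_mul' _ _ ENNReal.ofReal_ne_top
    _ ≤ 2 * ENNReal.ofReal (r ^ α) := by rw [mul_comm]; gcongr; exact h.2

theorem ae_eq_zero_of_psiNorm_eq_zero (hα : 0 < α) (hY : Measurable Y)
    (h : psiNorm P α Y = 0) : ∀ᵐ ω ∂P, Y ω = 0 := by
  have hbound : Tendsto (fun r : ℝ => 2 * ENNReal.ofReal (r ^ α)) (𝓝[>] 0) (𝓝 0) := by
    have hcont : Tendsto (fun r : ℝ => 2 * ENNReal.ofReal (r ^ α)) (𝓝 0)
        (𝓝 (2 * ENNReal.ofReal (0 ^ α))) :=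
      ENNReal.Tendsto.const_mul (ENNReal.tendsto_ofReal
        (continuousAt_rpow_const 0 α (Or.inr hα.le)).tendsto) (Or.inr ENNReal.ofNat_ne_top)
    simpa [zero_rpow hα.ne'] using tendsto_nhdsWithin_of_tendsto_nhds hcont
  have hzero : ∫⁻ ω, ENNReal.ofReal (|Y ω| ^ α) ∂P = 0 :=
    nonpos_iff_eq_zero.1 <| ge_of_tendsto hbound <| eventually_nhdsWithin_of_forall
      fun r hr => (psiAdmissible_of_psiNorm_eq_zero hα.le h hr).lintegral_rpow_le
  have hmeas : Measurable fun ω => ENNReal.ofReal (|Y ω| ^ α) :=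
    (hY.abs.pow_const α).ennreal_ofReal
  filter_upwards [(lintegral_eq_zero_iff hmeas).1 hzero] with ω hω
  have : |Y ω| ^ α ≤ 0 := ENNReal.ofReal_eq_zero.1 hω
  by_contra hne
  exact this.not_gt (rpow_pos_of_pos (abs_pos.2 hne) α)

theorem psiNorm_eq_zero_of_ae_eq_zero [IsProbabilityMeasure P] (hα : α ≠ 0)
    (hY : ∀ᵐ ω ∂P, Y ω = 0) : psiNorm P α Y = 0 := by
  have hadm : ∀ r : ℝ, 0 < r → PsiAdmissible P α Y r := fun r hr => by
    refine ⟨hr, ?_⟩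
    calc ∫⁻ ω, ENNReal.ofReal (exp (|Y ω| ^ α / r ^ α)) ∂P = ∫⁻ _, 1 ∂P :=
          lintegral_congr_ae <| hY.mono fun ω hω => by simp [hω, zero_rpow hα]
      _ ≤ 2 := by simp
  refine nonpos_iff_eq_zero.1 (ENNReal.le_of_forall_pos_le_add fun ε hε _ => ?_)
  simpa using psiNorm_le_ofReal_s10 (hadm ε hε)

theorem PsiAdmissible.mul {p q : ℝ} (hpq : p.HolderConjugate q) {X : Ω → ℝ}
    (hX : Measurable X) (hXr : PsiAdmissible P p X r) (hYs : PsiAdmissible P q Y s) :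
    PsiAdmissible P 1 (fun ω => X ω * Y ω) (r * s) := by
  refine ⟨mul_pos hXr.1 hYs.1, ?_⟩
  have hpoint : ∀ ω, exp (|X ω * Y ω| ^ (1 : ℝ) / (r * s) ^ (1 : ℝ)) ≤
      p⁻¹ * exp (|X ω| ^ p / r ^ p) + q⁻¹ * exp (|Y ω| ^ q / s ^ q) := fun ω => by
    have := exp_mul_le_of_holderConjugate hpq (div_nonneg (abs_nonneg (X ω)) hXr.1.le)
      (div_nonneg (abs_nonneg (Y ω)) hYs.1.le)
    rwa [div_rpow (abs_nonneg _) hXr.1.le, div_rpow (abs_nonneg _) hYs.1.le,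
      div_mul_div_comm, ← abs_mul, ← rpow_one (_ / _), div_rpow (abs_nonneg _)
      (mul_pos hXr.1 hYs.1).le] at this
  have hXmeas : Measurable fun ω => ENNReal.ofReal (exp (|X ω| ^ p / r ^ p)) :=
    (measurable_exp.comp ((hX.abs.pow_const p).div_const _)).ennreal_ofReal
  calc ∫⁻ ω, ENNReal.ofReal (exp (|X ω * Y ω| ^ (1 : ℝ) / (r * s) ^ (1 : ℝ))) ∂P
      ≤ ∫⁻ ω, (ENNReal.ofReal p⁻¹ * ENNReal.ofReal (exp (|X ω| ^ p / r ^ p))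
          + ENNReal.ofReal q⁻¹ * ENNReal.ofReal (exp (|Y ω| ^ q / s ^ q))) ∂P := by
        refine lintegral_mono fun ω => ?_
        rw [← ENNReal.ofReal_mul hpq.inv_nonneg, ← ENNReal.ofReal_mul hpq.symm.inv_nonneg,
          ← ENNReal.ofReal_add (mul_nonneg hpq.inv_nonneg (exp_pos _).le)
            (mul_nonneg hpq.symm.inv_nonneg (exp_pos _).le)]
        exact ENNReal.ofReal_le_ofReal (hpoint ω)
    _ = ENNReal.ofReal p⁻¹ * ∫⁻ ω, ENNReal.ofReal (exp (|X ω| ^ p / r ^ p)) ∂P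
        + ENNReal.ofReal q⁻¹ * ∫⁻ ω, ENNReal.ofReal (exp (|Y ω| ^ q / s ^ q)) ∂P := by
        rw [lintegral_add_left (hXmeas.const_mul _), lintegral_const_mul _ hXmeas,
          lintegral_const_mul' _ _ ENNReal.ofReal_ne_top]
    _ ≤ (ENNReal.ofReal p⁻¹ + ENNReal.ofReal q⁻¹) * 2 := by
        rw [add_mul]; gcongr; exacts [hXr.2, hYs.2]
    _ = 2 := by
        rw [← ENNReal.ofReal_add hpq.inv_nonneg hpq.symm.inv_nonneg, hpq.inv_add_inv_eq_one,
          ENNReal.ofReal_one, one_mul]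

end PsiAdmissible

/-- Hölder inequality for exponential Orlicz norms: if `p, q > 1` and `1/p + 1/q = 1`,
then `‖XY‖_{ψ_1} ≤ ‖X‖_{ψ_p} ‖Y‖_{ψ_q}`, interpreted in `[0,∞]`. -/
theorem stmt_10 {Ω : Type*} [MeasurableSpace Ω] (P : Measure Ω) [IsProbabilityMeasure P]
    (p q : ℝ) (hp : 1 < p) (hq : 1 < q) (hpq : 1 / p + 1 / q = 1)
    (X Y : Ω → ℝ) (hX : Measurable X) (hY : Measurable Y) :
    psiNorm P 1 (fun ω => X ω * Y ω) ≤ psiNorm P p X * psiNorm P q Y := by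
  have hconj : p.HolderConjugate q :=
    Real.holderConjugate_iff.2 ⟨hp, by simpa only [one_div] using hpq⟩
  by_cases hX0 : psiNorm P p X = 0
  · refine (psiNorm_eq_zero_of_ae_eq_zero one_ne_zero ?_).trans_le zero_le
    filter_upwards [ae_eq_zero_of_psiNorm_eq_zero (zero_lt_one.trans hp) hX hX0] with ω hω
    simp [hω]
  by_cases hY0 : psiNorm P q Y = 0
  · refine (psiNorm_eq_zero_of_ae_eq_zero one_ne_zero ?_).trans_le zero_le
    filter_upwards [ae_eq_zero_of_psiNorm_eq_zero (zero_lt_one.trans hq) hY hY0] with ω hω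
    simp [hω]
  refine ENNReal.le_mul_of_forall_lt (Or.inl hX0) (Or.inr hY0) fun a ha b hb => ?_
  obtain ⟨r, hr, hra⟩ := exists_psiAdmissible_lt ha
  obtain ⟨s, hs, hsb⟩ := exists_psiAdmissible_lt hb
  calc psiNorm P 1 (fun ω => X ω * Y ω) ≤ ENNReal.ofReal (r * s) :=
        psiNorm_le_ofReal_s10 (hr.mul hconj hX hs)
    _ = ENNReal.ofReal r * ENNReal.ofReal s := ENNReal.ofReal_mul hr.1.le
    _ ≤ a * b := by gcongr
end

section
/- Let X be a nonnegative random variable, let α ∈ (0,1], b > 0 and p ∈ (0,1], and assume that P(X ≥ t) ≤ 2·p^{−1}·exp(−(t/b)^α) for every t ≥ 0. Then E X ≤ 2^{1/α}·e·Γ(1 + 1/α)·(log(e/p))^{1/α}·b, where Γ is the Euler Gamma function Γ(z) = ∫_0^∞ t^{z−1} e^{−t} dt. -/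
/-!
Put `L = log (e / p) ≥ 1` and `β = (2L)^{1/α} b`. The tail bound improves to
`P(X ≥ t) ≤ e · exp (-(t/β)^α)` for every `t > 0`: for `t ≤ β` the right side is at
least `1`, and for `t ≥ β` the factor `2L` in `(t/b)^α = 2L (t/β)^α` absorbs the
constant `2/p = 2 e^{L-1}`.
Integrating this tail bound (layer cake) gives `E X ≤ e β Γ(1 + 1/α)`.
-/

open MeasureTheory Real Set

lemma integrableOn_exp_neg_div_rpow {α β : ℝ} (hα : 0 < α) (hβ : 0 < β) :
    IntegrableOn (fun t : ℝ => exp (-(t / β) ^ α)) (Ioi 0) := by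
  have h := integrableOn_rpow_mul_exp_neg_rpow (s := 0) neg_one_lt_zero hα
  simp only [rpow_zero, one_mul] at h
  simp_rw [div_eq_inv_mul]
  exact (integrableOn_Ioi_comp_mul_left_iff (fun x => exp (-x ^ α)) 0 (inv_pos.2 hβ)).2
    (by simpa using h)

lemma lintegral_exp_neg_div_rpow {α β : ℝ} (hα : 0 < α) (hβ : 0 < β) :
    ∫⁻ t in Ioi 0, ENNReal.ofReal (exp (-(t / β) ^ α))
      = ENNReal.ofReal (β * Gamma (1 + 1 / α)) := by
  rw [← ofReal_integral_eq_lintegral_ofReal (integrableOn_exp_neg_div_rpow hα hβ)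
    (Filter.Eventually.of_forall fun _ => (exp_pos _).le)]
  simp_rw [div_eq_inv_mul _ β]
  rw [integral_comp_mul_left_Ioi (fun x => exp (-x ^ α)) 0 (inv_pos.2 hβ), mul_zero,
    integral_exp_neg_rpow hα, inv_inv, smul_eq_mul, add_comm]

lemma lintegral_ofReal_le_of_meas_le_mul_exp_neg_rpow {Ω : Type*} [MeasurableSpace Ω]
    {μ : Measure Ω} {X : Ω → ℝ} (hX : AEMeasurable X μ) (hpos : 0 ≤ᵐ[μ] X)
    {α β C : ℝ} (hα : 0 < α) (hβ : 0 < β) (hC : 0 ≤ C)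
    (htail : ∀ t > 0, μ {ω | t ≤ X ω} ≤ ENNReal.ofReal (C * exp (-(t / β) ^ α))) :
    ∫⁻ ω, ENNReal.ofReal (X ω) ∂μ ≤ ENNReal.ofReal (C * β * Gamma (1 + 1 / α)) := by
  calc ∫⁻ ω, ENNReal.ofReal (X ω) ∂μ = ∫⁻ t in Ioi 0, μ {ω | t ≤ X ω} :=
        lintegral_eq_lintegral_meas_le μ hpos hX
    _ ≤ ∫⁻ t in Ioi 0, ENNReal.ofReal C * ENNReal.ofReal (exp (-(t / β) ^ α)) :=
        setLIntegral_mono' measurableSet_Ioi fun t ht =>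
          (htail t ht).trans_eq (ENNReal.ofReal_mul hC)
    _ = ENNReal.ofReal (C * β * Gamma (1 + 1 / α)) := by
        rw [lintegral_const_mul' _ _ ENNReal.ofReal_ne_top, lintegral_exp_neg_div_rpow hα hβ,
          ← ENNReal.ofReal_mul hC, mul_assoc]

lemma one_le_exp_one_mul_exp_neg_rpow {t β α : ℝ} (ht : 0 ≤ t) (htβ : t ≤ β)
    (hα : 0 ≤ α) : 1 ≤ exp 1 * exp (-(t / β) ^ α) := by
  have hβ : 0 ≤ β := ht.trans htβ
  have h : (t / β) ^ α ≤ 1 := rpow_le_one (div_nonneg ht hβ) (div_le_one_of_le₀ htβ hβ) hα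
  rw [← exp_add, one_le_exp_iff]
  linarith

lemma two_mul_exp_sub_one_mul_exp_neg_le {L s : ℝ} (hL : 1 ≤ L) (hs : 1 ≤ s) :
    2 * exp (L - 1) * exp (-(2 * L * s)) ≤ exp 1 * exp (-s) := by
  have h2 : (2 : ℝ) ≤ exp 1 := by linarith [add_one_le_exp (1 : ℝ)]
  calc 2 * exp (L - 1) * exp (-(2 * L * s)) ≤ exp 1 * exp (L - 1 - 2 * L * s) := by
        rw [mul_assoc, ← exp_add, ← sub_eq_add_neg]
        gcongr
    _ ≤ exp 1 * exp (-s) := by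
        gcongr
        nlinarith

lemma one_le_log_exp_one_div {p : ℝ} (hp : 0 < p) (hp1 : p ≤ 1) : 1 ≤ log (exp 1 / p) := by
  rw [log_div (exp_ne_zero 1) hp.ne', log_exp]
  linarith [log_nonpos hp.le hp1]

lemma two_mul_inv_mul_exp_neg_rpow_le {α b p t : ℝ} (hα : 0 < α) (hb : 0 < b) (hp : 0 < p)
    (hp1 : p ≤ 1) (ht : (2 * log (exp 1 / p)) ^ (1 / α) * b ≤ t) :
    2 * p⁻¹ * exp (-(t / b) ^ α)
      ≤ exp 1 * exp (-(t / ((2 * log (exp 1 / p)) ^ (1 / α) * b)) ^ α) := by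
  set L := log (exp 1 / p) with hL
  have hLp : L = 1 - log p := by rw [hL, log_div (exp_ne_zero 1) hp.ne', log_exp]
  have hL1 : 1 ≤ L := one_le_log_exp_one_div hp hp1
  set β := (2 * L) ^ (1 / α) * b
  have hβ : 0 < β := by positivity
  have hs : 1 ≤ (t / β) ^ α := one_le_rpow ((one_le_div hβ).2 ht) hα.le
  have hscale : (t / b) ^ α = 2 * L * (t / β) ^ α := by
    rw [show t / b = (2 * L) ^ (1 / α) * (t / β) by simp only [β]; field_simp,
      mul_rpow (by positivity) (div_nonneg (hβ.le.trans ht) hβ.le), ← rpow_mul (by positivity),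
      one_div_mul_cancel hα.ne', rpow_one]
  have hpinv : p⁻¹ = exp (L - 1) := by rw [hLp, sub_sub_cancel_left, exp_neg, exp_log hp]
  rw [hscale, hpinv]
  exact two_mul_exp_sub_one_mul_exp_neg_le hL1 hs

theorem stmt_12_general {Ω : Type*} [MeasurableSpace Ω] (P : Measure Ω) [IsProbabilityMeasure P]
    (X : Ω → ℝ) (hX : Measurable X) (hpos : ∀ᵐ ω ∂P, 0 ≤ X ω)
    (α b p : ℝ) (hα : 0 < α) (hb : 0 < b) (hp : 0 < p) (hp1 : p ≤ 1)
    (htail : ∀ t : ℝ, 0 ≤ t →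
      P {ω | t ≤ X ω} ≤ ENNReal.ofReal (2 * p⁻¹ * Real.exp (-(t / b) ^ α))) :
    ∫⁻ ω, ENNReal.ofReal (X ω) ∂P
      ≤ ENNReal.ofReal ((2 : ℝ) ^ (1 / α) * Real.exp 1 * Real.Gamma (1 + 1 / α) *
          (Real.log (Real.exp 1 / p)) ^ (1 / α) * b) := by
  have hL : 1 ≤ log (exp 1 / p) := one_le_log_exp_one_div hp hp1
  set β := (2 * log (exp 1 / p)) ^ (1 / α) * b with hβ_def
  have hβ : 0 < β := by positivity
  have htail' (t : ℝ) (ht : 0 < t) :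
      P {ω | t ≤ X ω} ≤ ENNReal.ofReal (exp 1 * exp (-(t / β) ^ α)) := by
    rcases le_total t β with htβ | hβt
    · exact prob_le_one.trans
        (ENNReal.one_le_ofReal.2 (one_le_exp_one_mul_exp_neg_rpow ht.le htβ hα.le))
    · exact (htail t ht.le).trans
        (ENNReal.ofReal_le_ofReal (two_mul_inv_mul_exp_neg_rpow_le hα hb hp hp1 hβt))
  refine (lintegral_ofReal_le_of_meas_le_mul_exp_neg_rpow hX.aemeasurable hpos hα hβ
    (exp_pos 1).le htail').trans_eq ?_
  rw [hβ_def, mul_rpow zero_le_two (by linarith)]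
  ring_nf

/-- If `X ≥ 0` a.s. and `P(X ≥ t) ≤ 2 p^{−1} exp(−(t/b)^α)` for all `t ≥ 0`, with
`α ∈ (0,1]`, `b > 0`, `p ∈ (0,1]`, then
`E X ≤ 2^{1/α} e Γ(1 + 1/α) (log(e/p))^{1/α} b` (the expectation interpreted in `[0,∞]`). -/
theorem stmt_12 {Ω : Type*} [MeasurableSpace Ω] (P : Measure Ω) [IsProbabilityMeasure P]
    (X : Ω → ℝ) (hX : Measurable X) (hpos : ∀ᵐ ω ∂P, 0 ≤ X ω)
    (α b p : ℝ) (hα : 0 < α) (hα1 : α ≤ 1) (hb : 0 < b) (hp : 0 < p) (hp1 : p ≤ 1)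
    (htail : ∀ t : ℝ, 0 ≤ t →
      P {ω | t ≤ X ω} ≤ ENNReal.ofReal (2 * p⁻¹ * Real.exp (-(t / b) ^ α))) :
    ∫⁻ ω, ENNReal.ofReal (X ω) ∂P
      ≤ ENNReal.ofReal ((2 : ℝ) ^ (1 / α) * Real.exp 1 * Real.Gamma (1 + 1 / α) *
          (Real.log (Real.exp 1 / p)) ^ (1 / α) * b) :=
  stmt_12_general P X hX hpos α b p hα hb hp hp1 htail
end

section
/- Let T_1, T_2, … be i.i.d. nonnegative random variables with E T_i = 1/θ for some θ > 0 and with ‖T_i‖_{ψ_1} ≤ d for some d > 0 (note that then θd ≥ 1). Then for every ε ∈ (0,1), every positive integer n and every integer k ≥ (1+ε)θn, P( T_1 + … + T_k ≤ n − 1 ) ≤ exp( −ε(k − θn) / (36 θ² d²) ). -/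
open MeasureTheory ProbabilityTheory Real

/-!
Chernoff's method for the lower tail. For `x ≥ 0` and `t ≥ 0`,
`exp (-t x) ≤ 1 - t x + t² x² ≤ 1 - t x + 2 t² c² exp (x / c)`, and any `c > d` satisfies
`E exp (T / c) ≤ 2`; hence `E exp (-t T) ≤ exp (-t / θ + 4 t² c²)`. Independence turns this into
`P (T₁ + ⋯ + T_k ≤ n - 1) ≤ exp (t n - k t / θ + 4 k t² c²)`, and the optimal
`t = (k - θ n) / (8 θ k c²)` gives the exponent `-(k - θ n)² / (16 θ² k c²)`. Finally
`k ≥ (1 + ε) θ n` gives `k - θ n ≥ ε k / 2`, and `c² ≤ 9 d² / 8` turns `16 · 2 · 9/8` into `36`.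
-/

namespace Real

/-- From `exp y ≥ 1 + y` and `(1 + y) (1 - y + y²) = 1 + y³ ≥ 1`. -/
lemma exp_neg_le_one_sub_add_sq {y : ℝ} (hy : 0 ≤ y) : exp (-y) ≤ 1 - y + y ^ 2 := by
  have h : exp (-y) * exp y = 1 := by rw [← exp_add, neg_add_cancel, exp_zero]
  nlinarith [add_one_le_exp y, exp_pos y, exp_pos (-y)]

lemma sq_le_two_mul_sq_mul_exp_div {x c : ℝ} (hx : 0 ≤ x) (hc : 0 < c) :
    x ^ 2 ≤ 2 * c ^ 2 * exp (x / c) := by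
  have h := quadratic_le_exp_of_nonneg (div_nonneg hx hc.le)
  calc x ^ 2 = 2 * c ^ 2 * ((x / c) ^ 2 / 2) := by field_simp
    _ ≤ 2 * c ^ 2 * exp (x / c) := by gcongr; linarith [div_nonneg hx hc.le]

lemma exp_neg_mul_le {x c t : ℝ} (hx : 0 ≤ x) (hc : 0 < c) (ht : 0 ≤ t) :
    exp (-t * x) ≤ 1 - t * x + 2 * t ^ 2 * c ^ 2 * exp (x / c) := by
  calc exp (-t * x) = exp (-(t * x)) := by rw [neg_mul]
    _ ≤ 1 - t * x + t ^ 2 * x ^ 2 := by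
      simpa [mul_pow] using exp_neg_le_one_sub_add_sq (mul_nonneg ht hx)
    _ ≤ 1 - t * x + 2 * t ^ 2 * c ^ 2 * exp (x / c) := by
      nlinarith [sq_le_two_mul_sq_mul_exp_div hx hc, sq_nonneg t]

end Real

section OrliczBound

variable {Ω : Type*} [MeasurableSpace Ω] {P : Measure Ω} {Y : Ω → ℝ} {c d : ℝ}

lemma lintegral_exp_abs_div_le_two_of_psiNorm_le (h : psiNorm P 1 Y ≤ ENNReal.ofReal d)
    (hc : 0 < c) (hdc : d < c) : ∫⁻ ω, ENNReal.ofReal (exp (|Y ω| / c)) ∂P ≤ 2 := by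
  have hlt : psiNorm P 1 Y < ENNReal.ofReal c :=
    h.trans_lt ((ENNReal.ofReal_lt_ofReal_iff hc).2 hdc)
  obtain ⟨_, ⟨r, hr, rfl, hr_int⟩, hrc⟩ := sInf_lt_iff.1 hlt
  rw [ENNReal.ofReal_lt_ofReal_iff hc] at hrc
  simp only [rpow_one] at hr_int
  refine le_trans (lintegral_mono fun ω => ?_) hr_int
  gcongr

lemma integrable_exp_abs_div (hY : Measurable Y)
    (hexp : ∫⁻ ω, ENNReal.ofReal (exp (|Y ω| / c)) ∂P ≤ 2) :
    Integrable (fun ω => exp (|Y ω| / c)) P := by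
  refine ⟨(hY.abs.div_const c).exp.aestronglyMeasurable, ?_⟩
  rw [hasFiniteIntegral_iff_ofReal (ae_of_all _ fun ω => (exp_pos _).le)]
  exact hexp.trans_lt ENNReal.ofNat_lt_top

lemma integral_exp_abs_div_le_two (hY : Measurable Y)
    (hexp : ∫⁻ ω, ENNReal.ofReal (exp (|Y ω| / c)) ∂P ≤ 2) :
    ∫ ω, exp (|Y ω| / c) ∂P ≤ 2 := by
  rw [← ENNReal.ofReal_le_ofReal_iff zero_le_two, ENNReal.ofReal_ofNat,
    ofReal_integral_eq_lintegral_ofReal (integrable_exp_abs_div hY hexp)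
      (ae_of_all _ fun ω => (exp_pos _).le)]
  exact hexp

lemma integrable_of_lintegral_exp_abs_div_le_two (hY : Measurable Y) (hc : 0 < c)
    (hexp : ∫⁻ ω, ENNReal.ofReal (exp (|Y ω| / c)) ∂P ≤ 2) : Integrable Y P := by
  refine ((integrable_exp_abs_div hY hexp).const_mul c).mono' hY.aestronglyMeasurable
    (ae_of_all _ fun ω => ?_)
  rw [norm_eq_abs]
  calc |Y ω| = c * (|Y ω| / c) := by field_simp
    _ ≤ c * exp (|Y ω| / c) := by gcongr; linarith [add_one_le_exp (|Y ω| / c)]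

end OrliczBound

section Chernoff

variable {Ω : Type*} [MeasurableSpace Ω] {μ : Measure Ω}

lemma integrable_exp_neg_mul_of_nonneg [IsFiniteMeasure μ] {X : Ω → ℝ} (hX : Measurable X)
    (hpos : 0 ≤ᵐ[μ] X) {t : ℝ} (ht : 0 ≤ t) : Integrable (fun ω => exp (-t * X ω)) μ := by
  refine (integrable_const 1).mono' (hX.const_mul _).exp.aestronglyMeasurable ?_
  filter_upwards [hpos] with ω hω
  rw [norm_of_nonneg (exp_pos _).le, exp_le_one_iff, neg_mul, neg_nonpos]
  exact mul_nonneg ht hω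

lemma mgf_neg_le_exp_of_lintegral_exp_abs_div_le_two [IsProbabilityMeasure μ] {Y : Ω → ℝ}
    {c t : ℝ} (hY : Measurable Y) (hpos : 0 ≤ᵐ[μ] Y) (hc : 0 < c)
    (hexp : ∫⁻ ω, ENNReal.ofReal (exp (|Y ω| / c)) ∂μ ≤ 2) (ht : 0 ≤ t) :
    mgf Y μ (-t) ≤ exp (-t * μ[Y] + 4 * t ^ 2 * c ^ 2) := by
  have hY_int := integrable_of_lintegral_exp_abs_div_le_two hY hc hexp
  have hlin : Integrable (fun ω => 1 - t * Y ω) μ := (integrable_const 1).sub (hY_int.const_mul t)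
  have hquad : Integrable (fun ω => 2 * t ^ 2 * c ^ 2 * exp (|Y ω| / c)) μ :=
    (integrable_exp_abs_div hY hexp).const_mul _
  calc mgf Y μ (-t)
      ≤ ∫ ω, (1 - t * Y ω + 2 * t ^ 2 * c ^ 2 * exp (|Y ω| / c)) ∂μ := by
        refine integral_mono_ae (integrable_exp_neg_mul_of_nonneg hY hpos ht) (hlin.add hquad) ?_
        filter_upwards [hpos] with ω hω
        simpa only [abs_of_nonneg hω] using exp_neg_mul_le hω hc ht
    _ = 1 - t * μ[Y] + 2 * t ^ 2 * c ^ 2 * ∫ ω, exp (|Y ω| / c) ∂μ := by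
        rw [integral_add hlin hquad, integral_sub (integrable_const 1) (hY_int.const_mul t),
          integral_const_mul, integral_const_mul]
        simp
    _ ≤ 1 + (-t * μ[Y] + 4 * t ^ 2 * c ^ 2) := by
        have h := mul_le_mul_of_nonneg_left (integral_exp_abs_div_le_two hY hexp)
          (by positivity : (0 : ℝ) ≤ 2 * t ^ 2 * c ^ 2)
        linarith
    _ ≤ exp (-t * μ[Y] + 4 * t ^ 2 * c ^ 2) := by
        linarith [add_one_le_exp (-t * μ[Y] + 4 * t ^ 2 * c ^ 2)]

lemma measureReal_sum_le_le_exp_of_mgf_le {ι : Type*} [IsProbabilityMeasure μ]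
    {X : ι → Ω → ℝ} (hindep : iIndepFun X μ) (hmeas : ∀ i, Measurable (X i))
    (hpos : ∀ i, 0 ≤ᵐ[μ] X i) {s : Finset ι} {t b : ℝ} (ht : 0 ≤ t)
    (hmgf : ∀ i ∈ s, mgf (X i) μ (-t) ≤ exp b) (x : ℝ) :
    μ.real {ω | ∑ i ∈ s, X i ω ≤ x} ≤ exp (t * x + s.card * b) := by
  have h := measure_le_le_exp_mul_mgf (X := ∑ i ∈ s, X i) x (neg_nonpos.2 ht)
    (hindep.integrable_exp_mul_sum hmeas fun i _ => integrable_exp_neg_mul_of_nonneg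
      (hmeas i) (hpos i) ht)
  rw [hindep.mgf_sum hmeas, neg_neg] at h
  simp only [Finset.sum_apply] at h
  calc μ.real {ω | ∑ i ∈ s, X i ω ≤ x} ≤ exp (t * x) * ∏ i ∈ s, mgf (X i) μ (-t) := h
    _ ≤ exp (t * x) * ∏ _i ∈ s, exp b := by
        gcongr with i hi
        exacts [fun _ _ => mgf_nonneg, hmgf i hi]
    _ = exp (t * x + s.card * b) := by rw [Finset.prod_const, ← exp_nat_mul, ← exp_add]

end Chernoff

lemma chernoff_exponent_le {θ c d ε K N x t : ℝ} (hθ : 0 < θ) (hc : 0 < c)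
    (hcd : 8 * c ^ 2 ≤ 9 * d ^ 2) (hε0 : 0 < ε) (hε1 : ε < 1) (hN : 0 ≤ N)
    (hK : (1 + ε) * θ * N ≤ K) (hx : x ≤ N) (ht : t = (K - θ * N) / (8 * θ * K * c ^ 2)) :
    t * x + K * (-t / θ + 4 * t ^ 2 * c ^ 2) ≤ -(ε * (K - θ * N) / (36 * θ ^ 2 * d ^ 2)) := by
  set a := K - θ * N with ha
  have hθN : 0 ≤ θ * N := mul_nonneg hθ.le hN
  have ha_nonneg : 0 ≤ a := by nlinarith
  rcases (show 0 ≤ K by linarith).eq_or_lt with rfl | hK0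
  · have hN0 : N = 0 := by nlinarith
    simp [ht, a, hN0]
  have hεK : ε * K ≤ 2 * a := by nlinarith
  have ha0 : 0 < a := by nlinarith
  have ht0 : 0 ≤ t := by rw [ht]; positivity
  have hd : d ≠ 0 := by rintro rfl; nlinarith
  calc t * x + K * (-t / θ + 4 * t ^ 2 * c ^ 2)
      ≤ t * N + K * (-t / θ + 4 * t ^ 2 * c ^ 2) := by gcongr
    _ = -(a ^ 2 / (16 * θ ^ 2 * K * c ^ 2)) := by rw [ht, ha]; field_simp; ring
    _ ≤ -(ε * a / (36 * θ ^ 2 * d ^ 2)) := by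
        rw [neg_le_neg_iff, div_le_div_iff₀ (by positivity) (by positivity)]
        have h := mul_le_mul hεK hcd (by positivity) (by positivity)
        nlinarith [mul_le_mul_of_nonneg_left h (by positivity : (0 : ℝ) ≤ 2 * a * θ ^ 2)]

theorem stmt_13_general {Ω : Type*} [MeasurableSpace Ω] (P : Measure Ω) [IsProbabilityMeasure P]
    (T : ℕ → Ω → ℝ) (hmeas : ∀ i, Measurable (T i))
    (hindep : iIndepFun T P)
    (hpos : ∀ i, ∀ᵐ ω ∂P, 0 ≤ T i ω)
    (θ d : ℝ) (hθ : 0 < θ) (hd : 0 < d)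
    (hmean : ∀ i, ∫ ω, T i ω ∂P = 1 / θ)
    (hψ : ∀ i, psiNorm P 1 (T i) ≤ ENNReal.ofReal d)
    (ε : ℝ) (hε : ε ∈ Set.Ioo (0 : ℝ) 1) (n : ℕ)
    (k : ℕ) (hk : (1 + ε) * θ * n ≤ (k : ℝ)) :
    P {ω | ∑ i ∈ Finset.range k, T i ω ≤ (n : ℝ) - 1}
      ≤ ENNReal.ofReal (Real.exp (-(ε * ((k : ℝ) - θ * n) / (36 * θ ^ 2 * d ^ 2)))) := by
  obtain ⟨hε0, hε1⟩ := hε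
  -- any `c > d` with `8 c² ≤ 9 d²` would do
  set c := 21 / 20 * d with hc_def
  have hc : 0 < c := by positivity
  have hcd : 8 * c ^ 2 ≤ 9 * d ^ 2 := by rw [hc_def]; nlinarith [sq_nonneg d]
  set t := ((k : ℝ) - θ * n) / (8 * θ * k * c ^ 2)
  have ht : 0 ≤ t := div_nonneg (by nlinarith [n.cast_nonneg (α := ℝ)]) (by positivity)
  have hmgf : ∀ i ∈ Finset.range k, mgf (T i) P (-t) ≤ exp (-t / θ + 4 * t ^ 2 * c ^ 2) := by
    intro i _
    have hexp := lintegral_exp_abs_div_le_two_of_psiNorm_le (hψ i) hc (by linarith)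
    simpa [hmean i, div_eq_mul_inv] using
      mgf_neg_le_exp_of_lintegral_exp_abs_div_le_two (hmeas i) (hpos i) hc hexp ht
  have hchernoff := measureReal_sum_le_le_exp_of_mgf_le hindep hmeas hpos ht hmgf ((n : ℝ) - 1)
  rw [Finset.card_range] at hchernoff
  rw [← ofReal_measureReal]
  refine ENNReal.ofReal_le_ofReal (hchernoff.trans (exp_le_exp.2 ?_))
  exact chernoff_exponent_le hθ hc hcd hε0 hε1 n.cast_nonneg hk (by linarith) rfl

/-- If `T_1, T_2, …` are i.i.d. nonnegative with `E T_i = 1/θ` and `‖T_i‖_{ψ_1} ≤ d`,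
then for `ε ∈ (0,1)`, `n ≥ 1` and an integer `k ≥ (1+ε)θn`,
`P(T_1 + … + T_k ≤ n − 1) ≤ exp(−ε(k − θn)/(36 θ² d²))`. -/
theorem stmt_13 {Ω : Type*} [MeasurableSpace Ω] (P : Measure Ω) [IsProbabilityMeasure P]
    (T : ℕ → Ω → ℝ) (hmeas : ∀ i, Measurable (T i))
    (hindep : iIndepFun T P)
    (hident : ∀ i j, IdentDistrib (T i) (T j) P P)
    (hpos : ∀ i, ∀ᵐ ω ∂P, 0 ≤ T i ω)
    (θ d : ℝ) (hθ : 0 < θ) (hd : 0 < d)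
    (hmean : ∀ i, ∫ ω, T i ω ∂P = 1 / θ)
    (hψ : ∀ i, psiNorm P 1 (T i) ≤ ENNReal.ofReal d)
    (ε : ℝ) (hε : ε ∈ Set.Ioo (0 : ℝ) 1) (n : ℕ) (hn : 0 < n)
    (k : ℕ) (hk : (1 + ε) * θ * n ≤ (k : ℝ)) :
    P {ω | ∑ i ∈ Finset.range k, T i ω ≤ (n : ℝ) - 1}
      ≤ ENNReal.ofReal (Real.exp (-(ε * ((k : ℝ) - θ * n) / (36 * θ ^ 2 * d ^ 2)))) :=
  stmt_13_general P T hmeas hindep hpos θ d hθ hd hmean hψ ε hε n k hk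
end

section
/- Let F be a countable set and let ξ_0, …, ξ_{n−1} be i.i.d. random elements, each ξ_i = (ξ_i(f))_{f∈F} being a real-valued stochastic process indexed by F, such that E|ξ_0(f)| < ∞ for every f ∈ F and E sup_{f∈F} |Σ_{i=0}^{n−1} ξ_i(f)| < ∞. Then for every integer m with 1 ≤ m ≤ n, E sup_{f∈F} |Σ_{i=0}^{n−1} ξ_i(f)| ≤ (n/m) · E sup_{f∈F} |Σ_{i=0}^{m−1} ξ_i(f)|. -/
open MeasureTheory ProbabilityTheory
open scoped ENNReal

/-!
Consider the `n` cyclic windows `{k, k+1, …, k+m-1} mod n` of the indices. Every index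
lies in exactly `m` of them, so `m · ∑_{i<n} ξ_i(f)` is the sum over `k` of the window sums
`W_k(f)`, and hence `m · sup_f |∑_{i<n} ξ_i(f)| ≤ ∑_k sup_f |W_k(f)|`. Since the `ξ_i` are
i.i.d., each window `(ξ_{k+i})_{i<m}` has the joint law of `(ξ_i)_{i<m}`, so taking
expectations gives `m · E sup_f |∑_{i<n} ξ_i(f)| ≤ n · E sup_f |∑_{i<m} ξ_i(f)|`.
-/

section

variable {ι κ : Type*}

noncomputable def supAbsSum [Fintype κ] (y : κ → ι → ℝ) : ℝ≥0∞ :=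
  ⨆ j, ENNReal.ofReal |∑ i, y i j|

theorem measurable_supAbsSum [Fintype κ] [Countable ι] :
    Measurable (supAbsSum : (κ → ι → ℝ) → ℝ≥0∞) :=
  Measurable.iSup fun _ => by fun_prop

theorem sum_sum_add_eq_card_smul_sum {M : Type*} [AddCommMonoid M] {n : ℕ} [NeZero n]
    [Fintype κ] (x : Fin n → M) (e : κ → Fin n) :
    ∑ k, ∑ i, x (k + e i) = Fintype.card κ • ∑ k, x k :=
  calc ∑ k, ∑ i, x (k + e i) = ∑ i, ∑ k, x (k + e i) := Finset.sum_comm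
    _ = ∑ _i : κ, ∑ k, x k :=
        Finset.sum_congr rfl fun i _ => Equiv.sum_comp (Equiv.addRight (e i)) x
    _ = Fintype.card κ • ∑ k, x k := by rw [Finset.sum_const, Finset.card_univ]

theorem card_mul_supAbsSum_le {n : ℕ} [NeZero n] [Fintype κ] (y : Fin n → ι → ℝ)
    (e : κ → Fin n) :
    Fintype.card κ * supAbsSum y ≤ ∑ k, supAbsSum fun i => y (k + e i) := by
  rw [supAbsSum, ENNReal.mul_iSup]
  refine iSup_le fun j => ?_
  calc (Fintype.card κ : ℝ≥0∞) * ENNReal.ofReal |∑ k, y k j|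
      = ENNReal.ofReal |∑ k, ∑ i, y (k + e i) j| := by
        rw [sum_sum_add_eq_card_smul_sum (y · j), nsmul_eq_mul, abs_mul, Nat.abs_cast,
          ENNReal.ofReal_mul (by positivity), ENNReal.ofReal_natCast]
    _ ≤ ENNReal.ofReal (∑ k, |∑ i, y (k + e i) j|) :=
        ENNReal.ofReal_le_ofReal (Finset.abs_sum_le_sum_abs _ _)
    _ = ∑ k, ENNReal.ofReal |∑ i, y (k + e i) j| :=
        ENNReal.ofReal_sum_of_nonneg fun _ _ => abs_nonneg _
    _ ≤ ∑ k, supAbsSum fun i => y (k + e i) :=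
        Finset.sum_le_sum fun k _ => le_iSup (fun j => ENNReal.ofReal |∑ i, y (k + e i) j|) j

end

namespace ProbabilityTheory

theorem iIndepFun.identDistrib_comp_injective {Ω ι κ β : Type*} [MeasurableSpace Ω]
    [MeasurableSpace β] {P : Measure Ω} [Fintype κ] {f : ι → Ω → β}
    (hf : ∀ i, Measurable (f i)) (hindep : iIndepFun f P)
    (hident : ∀ i j, IdentDistrib (f i) (f j) P P) {e e' : κ → ι}
    (he : e.Injective) (he' : e'.Injective) :
    IdentDistrib (fun ω k => f (e k) ω) (fun ω k => f (e' k) ω) P P where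
  aemeasurable_fst := (measurable_pi_lambda _ fun k => hf (e k)).aemeasurable
  aemeasurable_snd := (measurable_pi_lambda _ fun k => hf (e' k)).aemeasurable
  map_eq := by
    rw [(hindep.precomp he).map_fun_eq_pi_map fun k => (hf _).aemeasurable,
      (hindep.precomp he').map_fun_eq_pi_map fun k => (hf _).aemeasurable]
    exact congrArg Measure.pi (funext fun k => (hident (e k) (e' k)).map_eq)

end ProbabilityTheory

theorem card_mul_lintegral_supAbsSum_le {Ω ι : Type*} [MeasurableSpace Ω] {P : Measure Ω}
    [Countable ι] {n m : ℕ} [NeZero n] {X : Fin n → Ω → ι → ℝ}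
    (hX : ∀ i, Measurable (X i)) (hindep : iIndepFun X P)
    (hident : ∀ i j, IdentDistrib (X i) (X j) P P) (hmn : m ≤ n) :
    m * ∫⁻ ω, supAbsSum (fun i => X i ω) ∂P
      ≤ n * ∫⁻ ω, supAbsSum (fun i => X (Fin.castLE hmn i) ω) ∂P := by
  set e : Fin m → Fin n := Fin.castLE hmn
  have hwindow : ∀ k, ∫⁻ ω, supAbsSum (fun i => X (k + e i) ω) ∂P
      = ∫⁻ ω, supAbsSum (fun i => X (e i) ω) ∂P := fun k =>
    ((hindep.identDistrib_comp_injective hX hident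
      ((add_right_injective k).comp (Fin.castLE_injective hmn))
      (Fin.castLE_injective hmn)).comp measurable_supAbsSum).lintegral_eq
  calc (m : ℝ≥0∞) * ∫⁻ ω, supAbsSum (fun i => X i ω) ∂P
      = ∫⁻ ω, m * supAbsSum (fun i => X i ω) ∂P :=
        (lintegral_const_mul _ (measurable_supAbsSum.comp (measurable_pi_lambda _ hX))).symm
    _ ≤ ∫⁻ ω, ∑ k, supAbsSum (fun i => X (k + e i) ω) ∂P :=
        lintegral_mono fun ω => by
          simpa only [Fintype.card_fin] using card_mul_supAbsSum_le (fun i => X i ω) e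
    _ = ∑ k, ∫⁻ ω, supAbsSum (fun i => X (k + e i) ω) ∂P :=
        lintegral_finsetSum _ fun k _ =>
          measurable_supAbsSum.comp (measurable_pi_lambda _ fun i => hX _)
    _ = n * ∫⁻ ω, supAbsSum (fun i => X (e i) ω) ∂P := by simp [hwindow]

theorem stmt_14_general {Ω : Type*} [MeasurableSpace Ω] (P : Measure Ω)
    {ι : Type*} [Countable ι]
    (n : ℕ)
    (ξ : ℕ → Ω → ι → ℝ) (hmeas : ∀ i, i < n → Measurable (ξ i))
    (hindep : iIndepFun (fun i : Fin n => ξ i) P)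
    (hident : ∀ i j, i < n → j < n → IdentDistrib (ξ i) (ξ j) P P)
    (m : ℕ) (hm1 : 1 ≤ m) (hmn : m ≤ n) :
    ∫⁻ ω, (⨆ j : ι, ENNReal.ofReal |∑ i ∈ Finset.range n, ξ i ω j|) ∂P
      ≤ ENNReal.ofReal ((n : ℝ) / m) *
          ∫⁻ ω, (⨆ j : ι, ENNReal.ofReal |∑ i ∈ Finset.range m, ξ i ω j|) ∂P := by
  have : NeZero n := ⟨by omega⟩
  have hsupAbsSum : ∀ k ω, (⨆ j : ι, ENNReal.ofReal |∑ i ∈ Finset.range k, ξ i ω j|)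
      = supAbsSum fun i : Fin k => ξ i ω := fun k ω =>
    iSup_congr fun j => by rw [← Fin.sum_univ_eq_sum_range]
  simp only [hsupAbsSum]
  have hbound := card_mul_lintegral_supAbsSum_le (fun i => hmeas i i.2) hindep
    (fun i j => hident i j i.2 j.2) hmn
  have hm : (m : ℝ≥0∞) ≠ 0 := Nat.cast_ne_zero.mpr (by omega)
  calc ∫⁻ ω, supAbsSum (fun i : Fin n => ξ i ω) ∂P
      = (m : ℝ≥0∞)⁻¹ * (m * ∫⁻ ω, supAbsSum (fun i : Fin n => ξ i ω) ∂P) := by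
        rw [← mul_assoc, ENNReal.inv_mul_cancel hm (ENNReal.natCast_ne_top m), one_mul]
    _ ≤ (m : ℝ≥0∞)⁻¹ * (n * ∫⁻ ω, supAbsSum (fun i : Fin m => ξ i ω) ∂P) :=
        mul_le_mul_right hbound _
    _ = ENNReal.ofReal ((n : ℝ) / m) * ∫⁻ ω, supAbsSum (fun i : Fin m => ξ i ω) ∂P := by
        rw [ENNReal.ofReal_div_of_pos (by positivity), ENNReal.ofReal_natCast,
          ENNReal.ofReal_natCast, ENNReal.div_eq_inv_mul, mul_assoc]

/-- Exchangeability bound: if `ξ_0, …, ξ_{n−1}` are i.i.d. processes indexed by a countable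
set, with integrable coordinates and integrable supremum of the full sum, then for
`1 ≤ m ≤ n`, `E sup_f |Σ_{i<n} ξ_i(f)| ≤ (n/m) E sup_f |Σ_{i<m} ξ_i(f)|`
(suprema and expectations interpreted in `[0,∞]`). -/
theorem stmt_14 {Ω : Type*} [MeasurableSpace Ω] (P : Measure Ω) [IsProbabilityMeasure P]
    {ι : Type*} [Countable ι]
    (n : ℕ) (hn : 0 < n)
    (ξ : ℕ → Ω → ι → ℝ) (hmeas : ∀ i, i < n → Measurable (ξ i))
    (hindep : iIndepFun (fun i : Fin n => ξ i) P)
    (hident : ∀ i j, i < n → j < n → IdentDistrib (ξ i) (ξ j) P P)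
    (hint : ∀ j : ι, Integrable (fun ω => ξ 0 ω j) P)
    (hsupint : ∫⁻ ω, (⨆ j : ι, ENNReal.ofReal |∑ i ∈ Finset.range n, ξ i ω j|) ∂P ≠ ⊤)
    (m : ℕ) (hm1 : 1 ≤ m) (hmn : m ≤ n) :
    ∫⁻ ω, (⨆ j : ι, ENNReal.ofReal |∑ i ∈ Finset.range n, ξ i ω j|) ∂P
      ≤ ENNReal.ofReal ((n : ℝ) / m) *
          ∫⁻ ω, (⨆ j : ι, ENNReal.ofReal |∑ i ∈ Finset.range m, ξ i ω j|) ∂P :=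
  stmt_14_general P n ξ hmeas hindep hident m hm1 hmn
end
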